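/- Fix R > 0 and set c = inf_{x ∈ B_R} u_0(x)/H_R(x) ≥ 0. Let ψ : [0,∞) → [0,∞) be differentiable with ψ(0) = c, ψ ≥ 0, and ψ'(t) + Λ_R ψ(t) + ψ(t)^p = 0 for all t > 0. Then u(x,t) ≥ ψ(t) H_R(x) for every x ∈ B_R and every t ≥ 0. -/

import Mathlib

open MeasureTheory Filter Topology

private lemma aux_integrable {N : ℕ} (J : EuclideanSpace ℝ (Fin N) → ℝ)
    (hJc : Continuous J) (hJsupp : Function.support J ⊆ Metric.closedBall 0 1)
    {f : EuclideanSpace ℝ (Fin N) → ℝ} (hf : Continuous f)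
    (x : EuclideanSpace ℝ (Fin N)) (a : ℝ) :
    Integrable (fun y => J (x - y) * (f y - a)) := by
  apply Continuous.integrable_of_hasCompactSupport
  · exact (hJc.comp (continuous_const.sub continuous_id)).mul (hf.sub continuous_const)
  · apply HasCompactSupport.intro (isCompact_closedBall x 1)
    intro y hy
    have hJ0 : J (x - y) = 0 := by
      by_contra hne
      have hmem := hJsupp (Function.mem_support.mpr hne)
      rw [mem_closedBall_zero_iff] at hmem
      apply hy
      rw [Metric.mem_closedBall, dist_eq_norm]
      rw [show ‖y - x‖ = ‖x - y‖ from norm_sub_rev y x]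
      exact hmem
    simp [hJ0]

private lemma aux_deriv_nonpos {φ : ℝ → ℝ} {t d : ℝ} (ht : 0 < t)
    (hd : HasDerivAt φ d t) (hmin : ∀ s, 0 ≤ s → s < t → φ t ≤ φ s) : d ≤ 0 := by
  have h1 : Tendsto (slope φ t) (𝓝[≠] t) (𝓝 d) := hasDerivAt_iff_tendsto_slope.mp hd
  have h2 : Tendsto (slope φ t) (𝓝[<] t) (𝓝 d) :=
    h1.mono_left (nhdsWithin_mono _ (fun s hs => ne_of_lt hs))
  refine le_of_tendsto h2 ?_
  filter_upwards [Ioo_mem_nhdsLT_of_mem (Set.mem_Ioc.mpr ⟨ht, le_refl t⟩)] with s hs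
  have h3 : φ t ≤ φ s := hmin s hs.1.le hs.2
  have h4 : s - t < 0 := by linarith [hs.2]
  rw [slope_def_field]
  exact div_nonpos_of_nonneg_of_nonpos (by linarith) (by linarith)

set_option maxHeartbeats 1000000 in
/-- Comparison with the separated-variables subsolution: with
`c = inf_{B_R} u₀ / H_R ≥ 0` and `ψ` solving `ψ' + Λ_R ψ + ψ^p = 0`, `ψ(0) = c`,
one has `u(x,t) ≥ ψ(t) H_R(x)` on `B_R × [0,∞)`. -/
theorem stmt_8
    (N : ℕ) (hN : 0 < N)
    (J : EuclideanSpace ℝ (Fin N) → ℝ)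
    (hJsm : ContDiff ℝ (⊤ : ℕ∞) J)
    (hJsupp : Function.support J ⊆ Metric.closedBall 0 1)
    (hJnn : ∀ x, 0 ≤ J x)
    (hJrad : ∀ x y : EuclideanSpace ℝ (Fin N), ‖x‖ = ‖y‖ → J x = J y)
    (hJint : ∫ x, J x = 1)
    (Λ : ℝ → ℝ) (H : ℝ → EuclideanSpace ℝ (Fin N) → ℝ)
    (hHcont : ∀ R, 0 < R → Continuous (H R))
    (hHzero : ∀ R, 0 < R → ∀ x : EuclideanSpace ℝ (Fin N), R ≤ ‖x‖ → H R x = 0)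
    (hHpos : ∀ R, 0 < R → ∀ x : EuclideanSpace ℝ (Fin N), ‖x‖ < R →
      0 < H R x ∧ H R x ≤ 1)
    (hHsup : ∀ R, 0 < R → IsLUB (H R '' Metric.ball 0 R) 1)
    (hΛpos : ∀ R, 0 < R → 0 < Λ R)
    (hHeig : ∀ R, 0 < R → ∀ x : EuclideanSpace ℝ (Fin N), ‖x‖ < R →
      -(∫ y, J (x - y) * (H R y - H R x)) = Λ R * H R x)
    (p : ℝ) (hp : 1 < p)
    (u₀ : EuclideanSpace ℝ (Fin N) → ℝ)
    (hu₀nn : ∀ x, 0 ≤ u₀ x) (hu₀bd : ∃ M, ∀ x, u₀ x ≤ M)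
    (u : EuclideanSpace ℝ (Fin N) → ℝ → ℝ)
    (hubd : ∃ M, ∀ x t, |u x t| ≤ M)
    (hunn : ∀ x t, 0 ≤ t → 0 ≤ u x t)
    (hucont : Continuous fun q : EuclideanSpace ℝ (Fin N) × ℝ => u q.1 q.2)
    (hueq : ∀ x t, 0 < t →
      HasDerivAt (u x) ((∫ y, J (x - y) * (u y t - u x t)) - u x t ^ p) t)
    (huinit : ∀ x, u x 0 = u₀ x)
    (R : ℝ) (hR : 0 < R)
    (c : ℝ) (hc : c = ⨅ x : Metric.ball (0 : EuclideanSpace ℝ (Fin N)) R, u₀ x / H R x)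
    (hcnn : 0 ≤ c)
    (ψ : ℝ → ℝ) (hψ0 : ψ 0 = c) (hψnn : ∀ t : ℝ, 0 ≤ t → 0 ≤ ψ t)
    (hψcont : ContinuousOn ψ (Set.Ici 0))
    (hψode : ∀ t : ℝ, 0 < t → HasDerivAt ψ (-(Λ R * ψ t + ψ t ^ p)) t) :
    ∀ x : EuclideanSpace ℝ (Fin N), ‖x‖ < R → ∀ t : ℝ, 0 ≤ t →
      ψ t * H R x ≤ u x t := by
  -- initial comparison on the closed ball
  have hcH : ∀ x : EuclideanSpace ℝ (Fin N),
      x ∈ Metric.closedBall (0 : EuclideanSpace ℝ (Fin N)) R → c * H R x ≤ u₀ x := by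
    intro x hx
    rcases lt_or_ge ‖x‖ R with hlt | hge
    · have hH := (hHpos R hR x hlt).1
      have hb : BddBelow (Set.range fun y : Metric.ball (0 : EuclideanSpace ℝ (Fin N)) R =>
          u₀ (y : EuclideanSpace ℝ (Fin N)) / H R (y : EuclideanSpace ℝ (Fin N))) := by
        refine ⟨0, ?_⟩
        rintro v ⟨y, rfl⟩
        have hy : ‖(y : EuclideanSpace ℝ (Fin N))‖ < R := by
          have := y.2
          rwa [Metric.mem_ball, dist_zero_right] at this
        exact div_nonneg (hu₀nn _) (hHpos R hR _ hy).1.le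
      have hxball : x ∈ Metric.ball (0 : EuclideanSpace ℝ (Fin N)) R := by
        rwa [Metric.mem_ball, dist_zero_right]
      have hle : c ≤ u₀ x / H R x := by
        rw [hc]
        exact ciInf_le hb (⟨x, hxball⟩ : Metric.ball (0 : EuclideanSpace ℝ (Fin N)) R)
      calc c * H R x ≤ (u₀ x / H R x) * H R x := mul_le_mul_of_nonneg_right hle hH.le
        _ = u₀ x := div_mul_cancel₀ _ hH.ne'
    · rw [hHzero R hR x hge, mul_zero]
      exact hu₀nn x
  intro x₀ hx₀ t₀ ht₀
  by_contra hcon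
  push_neg at hcon
  have hΔpos : 0 < ψ t₀ * H R x₀ - u x₀ t₀ := by linarith
  set Δ : ℝ := ψ t₀ * H R x₀ - u x₀ t₀ with hΔ
  set ε : ℝ := Δ / (2 * Real.exp t₀) with hε
  have hεpos : 0 < ε := div_pos hΔpos (by positivity)
  have hεe : ε * Real.exp t₀ = Δ / 2 := by
    rw [hε]
    field_simp
  -- extended ψ, continuous on all of ℝ
  set ψ' : ℝ → ℝ := fun t => ψ (max t 0) with hψ'
  have hψ'cont : Continuous ψ' := by
    apply hψcont.comp_continuous (continuous_id.max continuous_const)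
    intro t
    exact Set.mem_Ici.mpr (le_max_right t 0)
  have hψ'eq : ∀ t : ℝ, 0 ≤ t → ψ' t = ψ t := by
    intro t ht
    simp [hψ', max_eq_left ht]
  set F : EuclideanSpace ℝ (Fin N) × ℝ → ℝ :=
    fun q => u q.1 q.2 - ψ' q.2 * H R q.1 + ε * Real.exp q.2 with hF
  have hFcont : Continuous F := by
    refine Continuous.add ?_ (continuous_const.mul (Real.continuous_exp.comp continuous_snd))
    exact hucont.sub ((hψ'cont.comp continuous_snd).mul ((hHcont R hR).comp continuous_fst))
  set cB := Metric.closedBall (0 : EuclideanSpace ℝ (Fin N)) R with hcB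
  have hcBcomp : IsCompact cB := isCompact_closedBall _ _
  set K := (cB ×ˢ Set.Icc (0 : ℝ) t₀) ∩ F ⁻¹' Set.Iic 0 with hK
  have hKcomp : IsCompact K :=
    (hcBcomp.prod isCompact_Icc).inter_right (isClosed_Iic.preimage hFcont)
  have hx₀cB : x₀ ∈ cB := by
    rw [hcB, mem_closedBall_zero_iff]
    exact hx₀.le
  have hKne : K.Nonempty := by
    refine ⟨(x₀, t₀), ⟨hx₀cB, ⟨ht₀, le_refl t₀⟩⟩, Set.mem_preimage.mpr (Set.mem_Iic.mpr ?_)⟩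
    show u x₀ t₀ - ψ' t₀ * H R x₀ + ε * Real.exp t₀ ≤ 0
    rw [hψ'eq t₀ ht₀]
    linarith [hεe]
  set S := Prod.snd '' K with hS
  have hScomp : IsCompact S := hKcomp.image continuous_snd
  have hSne : S.Nonempty := hKne.image _
  set t₁ := sInf S with ht₁
  have ht₁S : t₁ ∈ S := hScomp.sInf_mem hSne
  obtain ⟨⟨x₁, t₁'⟩, hqK, hq2⟩ := ht₁S
  have hq2' : t₁' = t₁ := hq2
  subst hq2'
  have hx₁cB : x₁ ∈ cB := hqK.1.1
  have ht₁Icc : t₁ ∈ Set.Icc (0 : ℝ) t₀ := hqK.1.2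
  have hFx₁ : F (x₁, t₁) ≤ 0 := hqK.2
  have hψt₁ : ψ' t₁ = ψ t₁ := hψ'eq t₁ ht₁Icc.1
  -- minimizer of w(·, t₁) on the closed ball
  have hgcont : Continuous fun x : EuclideanSpace ℝ (Fin N) => u x t₁ - ψ t₁ * H R x :=
    (hucont.comp (continuous_id.prodMk continuous_const)).sub
      (continuous_const.mul (hHcont R hR))
  obtain ⟨xs, hxscB, hxsmin⟩ :=
    hcBcomp.exists_isMinOn ⟨0, by simp [hcB, hR.le]⟩ hgcont.continuousOn
  have hmin' : ∀ y ∈ cB, u xs t₁ - ψ t₁ * H R xs ≤ u y t₁ - ψ t₁ * H R y :=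
    fun y hy => isMinOn_iff.mp hxsmin y hy
  have hFxs : F (xs, t₁) ≤ 0 := by
    have h1 := hmin' x₁ hx₁cB
    have h2 : u x₁ t₁ - ψ' t₁ * H R x₁ + ε * Real.exp t₁ ≤ 0 := hFx₁
    show u xs t₁ - ψ' t₁ * H R xs + ε * Real.exp t₁ ≤ 0
    rw [hψt₁] at h2 ⊢
    linarith
  have hFxs' : u xs t₁ - ψ t₁ * H R xs + ε * Real.exp t₁ ≤ 0 := by
    have := hFxs
    show u xs t₁ - ψ t₁ * H R xs + ε * Real.exp t₁ ≤ 0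
    rw [← hψt₁]
    exact this
  -- t₁ > 0
  have ht₁pos : 0 < t₁ := by
    rcases ht₁Icc.1.lt_or_eq with h | h
    · exact h
    · exfalso
      have hcHxs := hcH xs hxscB
      have he0 : ψ t₁ = c := by rw [← h, hψ0]
      have hu0 : u xs t₁ = u₀ xs := by rw [← h, huinit]
      have hexp : Real.exp t₁ = 1 := by rw [← h, Real.exp_zero]
      rw [he0, hu0, hexp, mul_one] at hFxs'
      linarith
  -- the minimum point is interior
  have hxsR : ‖xs‖ < R := by
    by_contra hge
    push_neg at hge
    have hH0 : H R xs = 0 := hHzero R hR xs hge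
    rw [hH0, mul_zero, sub_zero] at hFxs'
    have hu := hunn xs t₁ ht₁Icc.1
    have he := mul_pos hεpos (Real.exp_pos t₁)
    linarith
  -- derivative of φ(t) = u xs t - ψ t * H R xs + ε * exp t at t₁
  have hde : HasDerivAt (fun t => u xs t - ψ t * H R xs + ε * Real.exp t)
      ((((∫ y, J (xs - y) * (u y t₁ - u xs t₁)) - u xs t₁ ^ p)
        - (-(Λ R * ψ t₁ + ψ t₁ ^ p)) * H R xs) + ε * Real.exp t₁) t₁ :=
    ((hueq xs t₁ ht₁pos).sub ((hψode t₁ ht₁pos).mul_const (H R xs))).add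
      ((Real.hasDerivAt_exp t₁).const_mul ε)
  -- t₁ is a minimum over [0, t₁]
  have hmin : ∀ s, 0 ≤ s → s < t₁ →
      (u xs t₁ - ψ t₁ * H R xs + ε * Real.exp t₁) ≤
      (u xs s - ψ s * H R xs + ε * Real.exp s) := by
    intro s hs0 hst
    have hsIcc : s ∈ Set.Icc (0 : ℝ) t₀ := ⟨hs0, hst.le.trans ht₁Icc.2⟩
    have hFpos : 0 < F (xs, s) := by
      by_contra hle
      push_neg at hle
      have hmem : s ∈ S := ⟨(xs, s), ⟨⟨hxscB, hsIcc⟩, Set.mem_preimage.mpr hle⟩, rfl⟩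
      have : t₁ ≤ s := by
        rw [ht₁]
        exact csInf_le hScomp.bddBelow hmem
      linarith
    have e2 : F (xs, s) = u xs s - ψ s * H R xs + ε * Real.exp s := by
      show u xs s - ψ' s * H R xs + ε * Real.exp s = _
      rw [hψ'eq s hs0]
    rw [e2] at hFpos
    linarith
  have hdle := aux_deriv_nonpos ht₁pos hde hmin
  -- split the integral
  have hJcont : Continuous J := hJsm.continuous
  have hucont1 : Continuous fun y => u y t₁ :=
    hucont.comp (continuous_id.prodMk continuous_const)
  have hwcont : Continuous fun y : EuclideanSpace ℝ (Fin N) => u y t₁ - ψ t₁ * H R y :=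
    hucont1.sub (continuous_const.mul (hHcont R hR))
  have hIw_int := aux_integrable J hJcont hJsupp hwcont xs (u xs t₁ - ψ t₁ * H R xs)
  have hIH_int := aux_integrable J hJcont hJsupp (hHcont R hR) xs (H R xs)
  have hsplit : (∫ y, J (xs - y) * (u y t₁ - u xs t₁))
      = (∫ y, J (xs - y) * ((u y t₁ - ψ t₁ * H R y) - (u xs t₁ - ψ t₁ * H R xs)))
        + ψ t₁ * ∫ y, J (xs - y) * (H R y - H R xs) := by
    rw [← integral_const_mul, ← integral_add hIw_int (hIH_int.const_mul (ψ t₁))]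
    congr 1
    funext y
    ring
  have hIH : (∫ y, J (xs - y) * (H R y - H R xs)) = -(Λ R * H R xs) := by
    have := hHeig R hR xs hxsR
    linarith
  -- nonnegativity of the w-integral
  have hIw_nn : 0 ≤ ∫ y, J (xs - y) * ((u y t₁ - ψ t₁ * H R y) - (u xs t₁ - ψ t₁ * H R xs)) := by
    apply integral_nonneg
    intro y
    apply mul_nonneg (hJnn _)
    rcases le_or_gt ‖y‖ R with hy | hy
    · have hycB : y ∈ cB := by rw [hcB, mem_closedBall_zero_iff]; exact hy
      have := hmin' y hycB
      linarith
    · have hHy : H R y = 0 := hHzero R hR y hy.le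
      have huy := hunn y t₁ ht₁Icc.1
      have he := mul_pos hεpos (Real.exp_pos t₁)
      rw [hHy]
      linarith
  -- the power inequality
  have hψnn₁ : 0 ≤ ψ t₁ := hψnn t₁ ht₁Icc.1
  have hHxs := hHpos R hR xs hxsR
  have hupow : u xs t₁ ^ p ≤ ψ t₁ ^ p * H R xs := by
    have hunn₁ : 0 ≤ u xs t₁ := hunn xs t₁ ht₁Icc.1
    have hub : u xs t₁ ≤ ψ t₁ * H R xs := by
      have h := mul_pos hεpos (Real.exp_pos t₁)
      linarith
    calc u xs t₁ ^ p ≤ (ψ t₁ * H R xs) ^ p :=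
          Real.rpow_le_rpow hunn₁ hub (by linarith)
      _ = ψ t₁ ^ p * H R xs ^ p := Real.mul_rpow hψnn₁ hHxs.1.le
      _ ≤ ψ t₁ ^ p * H R xs := by
          have h1 : H R xs ^ p ≤ H R xs ^ (1 : ℝ) :=
            Real.rpow_le_rpow_of_exponent_ge hHxs.1 hHxs.2 hp.le
          rw [Real.rpow_one] at h1
          exact mul_le_mul_of_nonneg_left h1 (Real.rpow_nonneg hψnn₁ p)
  rw [hsplit, hIH] at hdle
  have he := mul_pos hεpos (Real.exp_pos t₁)
  linarith [hdle, hIw_nn, hupow, he]
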